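/- Fix a client n in a finite set V. For each other client m and coordinate k ∈ {1,…,K}, let e_{m,n,k} ∈ {0,1} indicate whether the k-th parameter of client m's model reaches client n, with e_{n,n,k} = 1 for all k and ∑_{k=1}^K e_{m,n,k} = ⌊r_m K⌋ for m ≠ n, where r_m ∈ (0,1] is client m's model retention rate. Let p_m ≥ 0 be weights with ∑_m p_m = 1, and define the local aggregation coefficients p_{m,n,k} = p_m e_{m,n,k} / (∑_{m'} p_{m'} e_{m',n,k}) and deviations λ_{m,n,k} = p_{m,n,k} − p_m. Then ∑_{k=1}^K ∑_{m∈V} λ_{m,n,k}² ≤ ∑_{l∈V∖{n}} (K − ⌊r_l K⌋) p_l² + (∑_{l∈V∖{n}} (K − ⌊r_l K⌋))². -/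

import Mathlib

/-!
Split each coordinate `k` into the clients that miss it (`e m k = 0`), whose deviation is
exactly `-p m`, and those that receive it, whose deviations are nonnegative and sum to
`1 - S k` with `S k = ∑ m, p m * e m k`. The first group gives the weighted count of pruned
parameters; for the second, a sum of squares of nonnegative reals is at most the square of
the sum, applied once over clients and once over coordinates, and `∑ k, (1 - S k)` is the
`p`-weighted number of pruned parameters.
-/

open Finset

lemma sq_aggregation_dev_eq {p e : ℝ} (S : ℝ) (he : e = 0 ∨ e = 1) :
    (p * e / S - p) ^ 2 = (1 - e) * p ^ 2 + (e * (p * e / S - p)) ^ 2 := by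
  rcases he with he | he <;> simp [he]

lemma mul_aggregation_dev_nonneg {p e S : ℝ} (hS : 0 < S) (hS1 : S ≤ 1) (he : e = 0 ∨ e = 1)
    (hp : 0 ≤ p) : 0 ≤ e * (p * e / S - p) := by
  rcases he with he | he
  · simp [he]
  · have : p ≤ p / S := le_div_self hp hS hS1
    simp only [he, mul_one, one_mul]
    linarith

section AggregationDeviation

variable {V : Type*} [Fintype V] {p e : V → ℝ}

lemma sum_mul_aggregation_dev {S : ℝ} (hS : S = ∑ m, p m * e m) (hS0 : S ≠ 0)
    (he : ∀ m, e m = 0 ∨ e m = 1) :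
    ∑ m, e m * (p m * e m / S - p m) = 1 - S := by
  have hterm : ∀ m, e m * (p m * e m / S - p m) = p m * e m / S - p m * e m := by
    intro m
    rcases he m with h | h <;> simp [h]
  rw [sum_congr rfl fun m _ => hterm m, sum_sub_distrib, ← sum_div, ← hS, div_self hS0]

lemma sum_sq_aggregation_dev_le (he : ∀ m, e m = 0 ∨ e m = 1) (hp : ∀ m, 0 ≤ p m)
    (hsum : ∑ m, p m = 1) (hS : 0 < ∑ m, p m * e m) :
    ∑ m, (p m * e m / (∑ m', p m' * e m') - p m) ^ 2 ≤
      ∑ m, (1 - e m) * p m ^ 2 + (1 - ∑ m, p m * e m) ^ 2 := by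
  set S := ∑ m, p m * e m with hSdef
  have hS1 : S ≤ 1 := hsum ▸ sum_le_sum fun m _ => by
    rcases he m with h | h <;> simp [h, hp m]
  calc ∑ m, (p m * e m / S - p m) ^ 2
      = ∑ m, (1 - e m) * p m ^ 2 + ∑ m, (e m * (p m * e m / S - p m)) ^ 2 := by
        rw [← sum_add_distrib]
        exact sum_congr rfl fun m _ => sq_aggregation_dev_eq S (he m)
    _ ≤ ∑ m, (1 - e m) * p m ^ 2 + (∑ m, e m * (p m * e m / S - p m)) ^ 2 := by
        gcongr
        exact sum_sq_le_sq_sum_of_nonneg fun m _ => mul_aggregation_dev_nonneg hS hS1 (he m) (hp m)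
    _ = ∑ m, (1 - e m) * p m ^ 2 + (1 - S) ^ 2 := by
        rw [sum_mul_aggregation_dev hSdef hS.ne' he]

end AggregationDeviation

lemma sum_sum_sq_aggregation_dev_le {V ι : Type*} [Fintype V] [Fintype ι] {p : V → ℝ}
    {e : V → ι → ℝ} (he : ∀ m k, e m k = 0 ∨ e m k = 1) (hp : ∀ m, 0 ≤ p m)
    (hsum : ∑ m, p m = 1) (hS : ∀ k, 0 < ∑ m, p m * e m k) :
    ∑ k, ∑ m, (p m * e m k / (∑ m', p m' * e m' k) - p m) ^ 2 ≤
      ∑ m, (∑ k, (1 - e m k)) * p m ^ 2 + (∑ m, ∑ k, (1 - e m k)) ^ 2 := by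
  have he1 : ∀ m k, 0 ≤ 1 - e m k := fun m k => by rcases he m k with h | h <;> simp [h]
  have hp1 : ∀ m, p m ≤ 1 := fun m => hsum ▸ single_le_sum (fun i _ => hp i) (mem_univ m)
  have hgap : ∀ k, 1 - ∑ m, p m * e m k = ∑ m, p m * (1 - e m k) := by
    intro k
    simp only [mul_sub, mul_one, sum_sub_distrib, hsum]
  calc ∑ k, ∑ m, (p m * e m k / (∑ m', p m' * e m' k) - p m) ^ 2
      ≤ ∑ k, (∑ m, (1 - e m k) * p m ^ 2 + (1 - ∑ m, p m * e m k) ^ 2) :=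
        sum_le_sum fun k _ => sum_sq_aggregation_dev_le (he · k) hp hsum (hS k)
    _ ≤ ∑ m, (∑ k, (1 - e m k)) * p m ^ 2 + (∑ k, ∑ m, p m * (1 - e m k)) ^ 2 := by
        rw [sum_add_distrib, sum_comm]
        simp only [← sum_mul, hgap]
        gcongr
        exact sum_sq_le_sq_sum_of_nonneg fun k _ =>
          sum_nonneg fun m _ => mul_nonneg (hp m) (he1 m k)
    _ ≤ ∑ m, (∑ k, (1 - e m k)) * p m ^ 2 + (∑ m, ∑ k, (1 - e m k)) ^ 2 := by
        rw [sum_comm]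
        gcongr with m _ k _
        · exact sum_nonneg fun m _ => sum_nonneg fun k _ => mul_nonneg (hp m) (he1 m k)
        · exact mul_le_of_le_one_left (he1 m k) (hp1 m)

theorem stmt_7_general {V : Type*} [Fintype V] [DecidableEq V] (K : ℕ) (n : V)
    (e : V → Fin K → ℝ) (he01 : ∀ m k, e m k = 0 ∨ e m k = 1)
    (hen : ∀ k, e n k = 1)
    (r : V → ℝ)
    (hcount : ∀ m, m ≠ n → ∑ k : Fin K, e m k = (⌊r m * K⌋ : ℝ))
    (p : V → ℝ) (hp : ∀ m, 0 < p m) (hsum : ∑ m : V, p m = 1) :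
    ∑ k : Fin K, ∑ m : V,
        (p m * e m k / (∑ m' : V, p m' * e m' k) - p m) ^ 2 ≤
      (∑ l ∈ Finset.univ \ {n}, ((K : ℝ) - ⌊r l * K⌋) * p l ^ 2) +
        (∑ l ∈ Finset.univ \ {n}, ((K : ℝ) - ⌊r l * K⌋)) ^ 2 := by
  have hS : ∀ k, 0 < ∑ m, p m * e m k := fun k =>
    lt_of_lt_of_le (by simpa [hen k] using hp n) <|
      single_le_sum (f := fun m => p m * e m k)
        (fun m _ => by rcases he01 m k with h | h <;> simp [h, (hp m).le]) (mem_univ n)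
  have hpruned : ∀ m ≠ n, (K : ℝ) - ⌊r m * K⌋ = ∑ k, (1 - e m k) := fun m hm => by
    simp [sum_sub_distrib, hcount m hm]
  have hpruned_n : ∑ k, (1 - e n k) = 0 := by simp [hen]
  have hweighted : ∑ l ∈ univ \ {n}, ((K : ℝ) - ⌊r l * K⌋) * p l ^ 2 =
      ∑ m, (∑ k, (1 - e m k)) * p m ^ 2 := by
    rw [sdiff_singleton_eq_erase, ← sum_erase univ (by rw [hpruned_n, zero_mul])]
    exact sum_congr rfl fun m hm => by rw [hpruned m (ne_of_mem_erase hm)]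
  have hpruned_total : ∑ l ∈ univ \ {n}, ((K : ℝ) - ⌊r l * K⌋) = ∑ m, ∑ k, (1 - e m k) := by
    rw [sdiff_singleton_eq_erase, ← sum_erase univ (f := fun m => ∑ k, (1 - e m k)) hpruned_n]
    exact sum_congr rfl fun m hm => hpruned m (ne_of_mem_erase hm)
  rw [hweighted, hpruned_total]
  exact sum_sum_sq_aggregation_dev_le he01 (fun m => (hp m).le) hsum hS

/-- Lemma 2: upper bound on the dominant part of the model aggregation bias. -/
theorem stmt_7 {V : Type*} [Fintype V] [DecidableEq V] (K : ℕ) (n : V)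
    (e : V → Fin K → ℝ) (he01 : ∀ m k, e m k = 0 ∨ e m k = 1)
    (hen : ∀ k, e n k = 1)
    (r : V → ℝ) (hr : ∀ m, 0 < r m ∧ r m ≤ 1)
    (hcount : ∀ m, m ≠ n → ∑ k : Fin K, e m k = (⌊r m * K⌋ : ℝ))
    (p : V → ℝ) (hp : ∀ m, 0 < p m) (hsum : ∑ m : V, p m = 1) :
    ∑ k : Fin K, ∑ m : V,
        (p m * e m k / (∑ m' : V, p m' * e m' k) - p m) ^ 2 ≤
      (∑ l ∈ Finset.univ \ {n}, ((K : ℝ) - ⌊r l * K⌋) * p l ^ 2) +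
        (∑ l ∈ Finset.univ \ {n}, ((K : ℝ) - ⌊r l * K⌋)) ^ 2 :=
  stmt_7_general K n e he01 hen r hcount p hp hsum
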